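/- Let n ≥ 2 and let G = (ℤ_2)^n be the n-cube with coordinatewise addition. Let ν be the probability measure on G with ν(s) = 1/(n+1) if the weight w(s) is 0 or 1, and ν(s) = 0 otherwise (the nearest-neighbour walk with loops on the n-cube). Let k ∈ ℕ and c > 0 be such that k = (n+1)(log n + c)/4. Then ‖ν^{⋆k} − π‖² ≤ (1/2)(e^{e^{−c}} − 1). -/

import Mathlib

/-!
The characters `s ↦ (-1) ^ (x ⬝ᵥ s)` of `(ℤ/2)ⁿ` diagonalise convolution, and the walk has
`ν̂(x) = 1 - 2 w(x) / (n + 1)`. Cauchy–Schwarz and Parseval give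
`4 ‖ν^{⋆k} - π‖² ≤ ∑_{x ≠ 0} ν̂(x)^{2k} = ∑_{j=1}^{n} C(n, j) (1 - 2j/(n+1))^{2k}`.
Replacing `j` by `n + 1 - j` only changes the sign of the eigenvalue and does not decrease
the binomial coefficient, so each term is at most its value at
`m = min j (n + 1 - j) ≤ (n + 1)/2`, where `C(n, m) ≤ nᵐ/m!` and
`(1 - 2m/(n+1))^{2k} ≤ e^{-4mk/(n+1)} = (e^{-c}/n)ᵐ`. Each `m` arises from at most two `j`,
so the sum is at most `2 ∑_{m ≥ 1} e^{-cm}/m! = 2 (e^{e^{-c}} - 1)`.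
-/

open Finset

/-- Convolution on a finite additive group: `(aconv μ ν) s = ∑ t, μ (s - t) * ν t`. -/
noncomputable def aconv {G : Type*} [AddGroup G] [Fintype G] (μ ν : G → ℝ) : G → ℝ :=
  fun s => ∑ t, μ (s - t) * ν t

/-- Convolution powers: `aconvPow ν 0 = δ_0`, `aconvPow ν (k+1) = aconv ν (aconvPow ν k)`. -/
noncomputable def aconvPow {G : Type*} [AddGroup G] [Fintype G] [DecidableEq G]
    (ν : G → ℝ) : ℕ → G → ℝ
  | 0 => fun s => if s = 0 then 1 else 0
  | k + 1 => aconv ν (aconvPow ν k)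

/-- Total variation distance. -/
noncomputable def tv {G : Type*} [Fintype G] (μ ν : G → ℝ) : ℝ :=
  (1 / 2) * ∑ s, |μ s - ν s|

/-- The weight of `s ∈ (ℤ₂)ⁿ`: the number of coordinates equal to 1. -/
def cubeWeight {n : ℕ} (s : Fin n → ZMod 2) : ℕ :=
  (Finset.univ.filter (fun i => s i = 1)).card

section FiniteGroup

variable {G : Type*} [AddGroup G] [Fintype G]

/-- The unnormalised Fourier coefficient `f̂(ψ)`. -/
noncomputable def charCoeff (f : G → ℝ) (ψ : AddChar G ℝ) : ℝ :=
  ∑ s, f s * ψ s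

theorem charCoeff_sub (f g : G → ℝ) (ψ : AddChar G ℝ) :
    charCoeff (fun s => f s - g s) ψ = charCoeff f ψ - charCoeff g ψ := by
  simp only [charCoeff, sub_mul, Finset.sum_sub_distrib]

theorem charCoeff_const (a : ℝ) (ψ : AddChar G ℝ) :
    charCoeff (fun _ => a) ψ = if ψ = 0 then a * Fintype.card G else 0 := by
  rw [charCoeff, ← Finset.mul_sum, AddChar.sum_eq_ite, mul_ite, mul_zero]

theorem charCoeff_aconv (μ f : G → ℝ) (ψ : AddChar G ℝ) :
    charCoeff (aconv μ f) ψ = charCoeff μ ψ * charCoeff f ψ := by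
  have shift (t : G) : ∑ s, μ (s - t) * ψ s = charCoeff μ ψ * ψ t := by
    rw [charCoeff, Finset.sum_mul]
    exact Fintype.sum_equiv (Equiv.subRight t) _ _ fun s => by
      simp [← AddChar.map_add_eq_mul, mul_assoc]
  calc charCoeff (aconv μ f) ψ = ∑ t, (∑ s, μ (s - t) * ψ s) * f t := by
        simp only [charCoeff, aconv, Finset.sum_mul]
        rw [Finset.sum_comm]
        exact Finset.sum_congr rfl fun t _ => Finset.sum_congr rfl fun s _ => by ring
    _ = charCoeff μ ψ * charCoeff f ψ := by
        simp only [shift, charCoeff, Finset.mul_sum]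
        exact Finset.sum_congr rfl fun t _ => by ring

theorem charCoeff_aconvPow [DecidableEq G] (ν : G → ℝ) (ψ : AddChar G ℝ) (k : ℕ) :
    charCoeff (aconvPow ν k) ψ = charCoeff ν ψ ^ k := by
  induction k with
  | zero => simp [charCoeff, aconvPow]
  | succ k ih => rw [aconvPow, charCoeff_aconv, ih, pow_succ']

end FiniteGroup

theorem tv_sq_le_card_mul_sum_sq {G : Type*} [Fintype G] (μ ν : G → ℝ) :
    tv μ ν ^ 2 ≤ Fintype.card G / 4 * ∑ s, (μ s - ν s) ^ 2 := by
  have := sq_sum_le_card_mul_sum_sq (s := Finset.univ) (f := fun s => |μ s - ν s|)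
  simp only [sq_abs, Finset.card_univ] at this
  rw [tv]
  nlinarith

theorem ZMod.eq_zero_or_eq_one (a : ZMod 2) : a = 0 ∨ a = 1 := by
  revert a; decide

theorem ZMod.neg_one_pow_val_two (a : ZMod 2) :
    (-1 : ℝ) ^ a.val = if a = 1 then -1 else 1 := by
  obtain rfl | rfl := ZMod.eq_zero_or_eq_one a <;> simp [ZMod.val_one]

section Walsh

variable {ι : Type*} [Fintype ι]

noncomputable def walsh (x : ι → ZMod 2) : AddChar (ι → ZMod 2) ℝ where
  toFun s := (-1) ^ (x ⬝ᵥ s).val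
  map_zero_eq_one' := by simp
  map_add_eq_mul' s t := by
    rw [dotProduct_add, ZMod.val_add, ← pow_add, ← neg_one_pow_eq_pow_mod_two]

theorem walsh_apply (x s : ι → ZMod 2) : walsh x s = (-1) ^ (x ⬝ᵥ s).val := rfl

theorem walsh_comm (x s : ι → ZMod 2) : walsh x s = walsh s x := by
  rw [walsh_apply, walsh_apply, dotProduct_comm]

theorem walsh_single [DecidableEq ι] (x : ι → ZMod 2) (i : ι) :
    walsh x (Pi.single i 1) = if x i = 1 then -1 else 1 := by
  rw [walsh_apply, dotProduct_single, mul_one, ZMod.neg_one_pow_val_two]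

theorem walsh_eq_zero_iff {x : ι → ZMod 2} : walsh x = 0 ↔ x = 0 := by
  classical
  refine ⟨fun h => funext fun i => ?_, fun h => by ext s; simp [h, walsh_apply]⟩
  have := DFunLike.congr_fun h (Pi.single i 1)
  rw [walsh_single, AddChar.zero_apply] at this
  obtain h0 | h1 := ZMod.eq_zero_or_eq_one (x i)
  · exact h0
  · norm_num [h1] at this

theorem sum_walsh_apply [DecidableEq ι] (u : ι → ZMod 2) :
    ∑ x, walsh x u = if u = 0 then (2 : ℝ) ^ Fintype.card ι else 0 := by
  simp [walsh_comm _ u, AddChar.sum_eq_ite, walsh_eq_zero_iff]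

theorem sum_charCoeff_walsh_sq [DecidableEq ι] (f : (ι → ZMod 2) → ℝ) :
    ∑ x, charCoeff f (walsh x) ^ 2 = 2 ^ Fintype.card ι * ∑ s, f s ^ 2 := by
  have add_eq_zero {s t : ι → ZMod 2} : s + t = 0 ↔ s = t := by
    rw [add_eq_zero_iff_eq_neg, show -t = t from funext fun i => ZMod.neg_eq_self_mod_two _]
  have expand (x : ι → ZMod 2) :
      charCoeff f (walsh x) ^ 2 = ∑ s, ∑ t, f s * f t * walsh x (s + t) := by
    simp only [charCoeff, sq, Finset.sum_mul_sum, AddChar.map_add_eq_mul]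
    exact Finset.sum_congr rfl fun s _ => Finset.sum_congr rfl fun t _ => by ring
  calc ∑ x, charCoeff f (walsh x) ^ 2
      = ∑ s, ∑ t, f s * f t * ∑ x, walsh x (s + t) := by
        simp only [expand, Finset.mul_sum]
        rw [Finset.sum_comm]
        exact Finset.sum_congr rfl fun s _ => Finset.sum_comm
    _ = 2 ^ Fintype.card ι * ∑ s, f s ^ 2 := by
        simp [sum_walsh_apply, add_eq_zero, Finset.mul_sum, sq, mul_comm]

end Walsh

theorem Finset.sum_range_succ_eq_add_sum_Icc {M : Type*} [AddCommMonoid M] (f : ℕ → M)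
    (n : ℕ) : ∑ j ∈ range (n + 1), f j = f 0 + ∑ j ∈ Icc 1 n, f j := by
  rw [range_eq_Ico, sum_eq_sum_Ico_succ_bot n.succ_pos, zero_add, Nat.succ_eq_add_one,
    Ico_add_one_right_eq_Icc]

theorem Nat.choose_le_choose_min {n j : ℕ} (hj : j ≤ n) :
    n.choose j ≤ n.choose (min j (n + 1 - j)) := by
  rcases le_or_gt j (n + 1 - j) with h | h
  · rw [min_eq_left h]
  · rw [min_eq_right h.le, ← Nat.choose_symm hj, show n + 1 - j = n - j + 1 by omega]
    exact Nat.choose_le_succ_of_lt_half_left (by omega)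

theorem sum_Icc_min_reflect_le {t : ℕ → ℝ} (ht : ∀ m, 0 ≤ t m) (n : ℕ) :
    ∑ j ∈ Finset.Icc 1 n, t (min j (n + 1 - j)) ≤ 2 * ∑ j ∈ Finset.Icc 1 n, t j := by
  have reflect : ∑ j ∈ Finset.Icc 1 n, t (n + 1 - j) = ∑ j ∈ Finset.Icc 1 n, t j :=
    Finset.sum_nbij' (fun j => n + 1 - j) (fun j => n + 1 - j) (by simp; omega) (by simp; omega)
      (by simp; omega) (by simp; omega) (fun _ _ => rfl)
  calc ∑ j ∈ Finset.Icc 1 n, t (min j (n + 1 - j))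
      ≤ ∑ j ∈ Finset.Icc 1 n, (t j + t (n + 1 - j)) := Finset.sum_le_sum fun j _ => by
        rcases min_choice j (n + 1 - j) with h | h <;> rw [h] <;> linarith [ht j, ht (n + 1 - j)]
    _ = 2 * ∑ j ∈ Finset.Icc 1 n, t j := by rw [Finset.sum_add_distrib, reflect, two_mul]

theorem sum_Icc_pow_div_factorial_le {x : ℝ} (hx : 0 ≤ x) (n : ℕ) :
    ∑ m ∈ Finset.Icc 1 n, x ^ m / m.factorial ≤ Real.exp x - 1 := by
  have := Real.sum_le_exp_of_nonneg hx (n + 1)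
  rw [Finset.sum_range_succ_eq_add_sum_Icc] at this
  simp only [pow_zero, Nat.factorial_zero, Nat.cast_one, div_one] at this
  linarith

section Cube

variable {n : ℕ}

theorem cubeWeight_eq_zero_iff {s : Fin n → ZMod 2} : cubeWeight s = 0 ↔ s = 0 := by
  simp only [cubeWeight, Finset.card_eq_zero, Finset.filter_eq_empty_iff, Finset.mem_univ,
    true_implies, funext_iff, Pi.zero_apply]
  exact forall_congr' fun i => by obtain h | h := ZMod.eq_zero_or_eq_one (s i) <;> simp [h]

theorem cubeWeight_eq_one_iff {s : Fin n → ZMod 2} :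
    cubeWeight s = 1 ↔ ∃ i, s = Pi.single i 1 := by
  simp only [cubeWeight, Finset.card_eq_one, Finset.ext_iff, Finset.mem_filter, Finset.mem_univ,
    true_and, Finset.mem_singleton, funext_iff]
  refine exists_congr fun i => forall_congr' fun j => ?_
  obtain h | h := ZMod.eq_zero_or_eq_one (s j) <;> by_cases hji : j = i <;> simp [h, hji]

theorem sum_comp_cubeWeight (g : ℕ → ℝ) :
    ∑ x : Fin n → ZMod 2, g (cubeWeight x)
      = ∑ j ∈ Finset.range (n + 1), n.choose j * g j := by
  let e : Finset (Fin n) ≃ (Fin n → ZMod 2) :=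
    { toFun S i := if i ∈ S then 1 else 0
      invFun x := {i | x i = 1}
      left_inv S := by ext i; by_cases i ∈ S <;> simp [*]
      right_inv x := funext fun i => by
        obtain h | h := ZMod.eq_zero_or_eq_one (x i) <;> simp [h] }
  have weight_e (S : Finset (Fin n)) : cubeWeight (e S) = S.card := by
    simp [e, cubeWeight]
  rw [← e.sum_comp, ← Finset.powerset_univ]
  simp only [weight_e]
  rw [Finset.sum_powerset_apply_card]
  simp

theorem sum_walsh_single (x : Fin n → ZMod 2) :
    ∑ i, walsh x (Pi.single i 1) = n - 2 * cubeWeight x := by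
  have (i : Fin n) : walsh x (Pi.single i 1) = 1 - 2 * if x i = 1 then 1 else 0 := by
    rw [walsh_single]; split_ifs <;> norm_num
  rw [Finset.sum_congr rfl fun i _ => this i, Finset.sum_sub_distrib, ← Finset.mul_sum,
    Finset.sum_boole]
  simp [cubeWeight]

variable (n) in
noncomputable def cubeWalk : (Fin n → ZMod 2) → ℝ :=
  fun s => if cubeWeight s = 0 ∨ cubeWeight s = 1 then 1 / ((n : ℝ) + 1) else 0

variable (n) in
noncomputable def cubeWalkEigenvalue (j : ℕ) : ℝ := 1 - 2 * j / ((n : ℝ) + 1)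

theorem charCoeff_cubeWalk (x : Fin n → ZMod 2) :
    charCoeff (cubeWalk n) (walsh x) = cubeWalkEigenvalue n (cubeWeight x) := by
  have support :
      Finset.univ.filter (fun s : Fin n → ZMod 2 => cubeWeight s = 0 ∨ cubeWeight s = 1)
        = insert 0 (Finset.univ.image fun i => Pi.single i 1) := by
    ext s
    simp [cubeWeight_eq_zero_iff, cubeWeight_eq_one_iff, eq_comm]
  have single_ne_zero (i : Fin n) : (Pi.single i 1 : Fin n → ZMod 2) ≠ 0 :=
    Pi.single_ne_zero_iff.mpr one_ne_zero
  calc charCoeff (cubeWalk n) (walsh x)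
      = 1 / ((n : ℝ) + 1) * ∑ s ∈ Finset.univ.filter
          (fun s : Fin n → ZMod 2 => cubeWeight s = 0 ∨ cubeWeight s = 1), walsh x s := by
        rw [Finset.mul_sum, Finset.sum_filter]
        simp only [charCoeff, cubeWalk, ite_mul, zero_mul]
    _ = 1 / ((n : ℝ) + 1) * (1 + (n - 2 * cubeWeight x)) := by
        rw [support, Finset.sum_insert (by simp [single_ne_zero]),
          Finset.sum_image fun i _ j _ h => by simpa [Pi.single_apply] using congrFun h i,
          sum_walsh_single, AddChar.map_zero_eq_one]
    _ = cubeWalkEigenvalue n (cubeWeight x) := by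
        rw [cubeWalkEigenvalue]
        field_simp
        ring

theorem sum_sq_charCoeff_aconvPow_cubeWalk_sub_uniform (k : ℕ) :
    ∑ x, charCoeff (fun s => aconvPow (cubeWalk n) k s - 1 / 2 ^ n) (walsh x) ^ 2
      = ∑ j ∈ Finset.Icc 1 n, n.choose j * cubeWalkEigenvalue n j ^ (2 * k) := by
  have coeff (x : Fin n → ZMod 2) :
      charCoeff (fun s => aconvPow (cubeWalk n) k s - 1 / 2 ^ n) (walsh x)
        = cubeWalkEigenvalue n (cubeWeight x) ^ k - if cubeWeight x = 0 then 1 else 0 := by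
    rw [charCoeff_sub, charCoeff_aconvPow, charCoeff_cubeWalk, charCoeff_const]
    simp [walsh_eq_zero_iff, ← cubeWeight_eq_zero_iff]
  have leading : cubeWalkEigenvalue n 0 = 1 := by simp [cubeWalkEigenvalue]
  simp only [coeff]
  rw [sum_comp_cubeWeight (fun j => (cubeWalkEigenvalue n j ^ k - if j = 0 then 1 else 0) ^ 2),
    Finset.sum_range_succ_eq_add_sum_Icc, leading, one_pow, if_pos rfl, sub_self,
    zero_pow two_ne_zero, mul_zero, zero_add]
  refine Finset.sum_congr rfl fun j hj => ?_
  rw [if_neg (by simp at hj; omega), sub_zero, ← pow_mul, mul_comm k]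

theorem cubeWalkEigenvalue_reflect {j : ℕ} (hj : j ≤ n + 1) :
    cubeWalkEigenvalue n (n + 1 - j) = -cubeWalkEigenvalue n j := by
  simp only [cubeWalkEigenvalue, Nat.cast_sub hj]
  field_simp
  push_cast
  ring

theorem cubeWalkEigenvalue_pow_le {c : ℝ} {k m : ℕ} (hn : 0 < n) (hm : 2 * m ≤ n + 1)
    (hk : ((n : ℝ) + 1) * (Real.log n + c) / 4 ≤ k) :
    cubeWalkEigenvalue n m ^ (2 * k) ≤ Real.exp (-c) ^ m / (n : ℝ) ^ m := by
  have hpos : (0 : ℝ) < n + 1 := by positivity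
  have nonneg : 0 ≤ cubeWalkEigenvalue n m := by
    rw [cubeWalkEigenvalue, sub_nonneg, div_le_one hpos]
    exact_mod_cast hm
  have exponent : (m : ℝ) * (Real.log n + c) ≤ 2 * m / ((n : ℝ) + 1) * (2 * k : ℕ) := by
    rw [div_mul_eq_mul_div, le_div_iff₀ hpos]
    push_cast
    nlinarith [(Nat.cast_nonneg m : (0 : ℝ) ≤ m)]
  calc cubeWalkEigenvalue n m ^ (2 * k)
      ≤ Real.exp (-(2 * m / ((n : ℝ) + 1))) ^ (2 * k) :=
        pow_le_pow_left₀ nonneg (Real.one_sub_le_exp_neg _) _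
    _ ≤ Real.exp (m * (-c) - m * Real.log n) := by
        rw [← Real.exp_nat_mul, Real.exp_le_exp]
        linarith
    _ = Real.exp (-c) ^ m / (n : ℝ) ^ m := by
        rw [Real.exp_sub, Real.exp_nat_mul, Real.exp_nat_mul, Real.exp_log (by exact_mod_cast hn)]

theorem choose_mul_cubeWalkEigenvalue_pow_le {c : ℝ} {j k : ℕ} (hj : j ∈ Finset.Icc 1 n)
    (hk : ((n : ℝ) + 1) * (Real.log n + c) / 4 ≤ k) :
    n.choose j * cubeWalkEigenvalue n j ^ (2 * k)
      ≤ Real.exp (-c) ^ min j (n + 1 - j) / (min j (n + 1 - j)).factorial := by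
  rw [Finset.mem_Icc] at hj
  set m := min j (n + 1 - j) with hm_def
  have same_power : cubeWalkEigenvalue n j ^ (2 * k) = cubeWalkEigenvalue n m ^ (2 * k) := by
    rcases min_choice j (n + 1 - j) with h | h <;> rw [hm_def, h]
    rw [cubeWalkEigenvalue_reflect (by omega), Even.neg_pow (even_two_mul k)]
  have choose_le : (n.choose j : ℝ) ≤ (n : ℝ) ^ m / m.factorial :=
    (Nat.cast_le.mpr (Nat.choose_le_choose_min hj.2)).trans (Nat.choose_le_pow_div m n)
  calc n.choose j * cubeWalkEigenvalue n j ^ (2 * k)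
      ≤ (n : ℝ) ^ m / m.factorial * (Real.exp (-c) ^ m / (n : ℝ) ^ m) := by
        rw [same_power]
        exact mul_le_mul choose_le (cubeWalkEigenvalue_pow_le (by omega) (by omega) hk)
          (Even.pow_nonneg (even_two_mul k) _) (by positivity)
    _ = Real.exp (-c) ^ m / m.factorial := by
        have : (n : ℝ) ≠ 0 := by exact_mod_cast (show n ≠ 0 by omega)
        field_simp

theorem sum_choose_mul_cubeWalkEigenvalue_pow_le {c : ℝ} {k : ℕ}
    (hk : ((n : ℝ) + 1) * (Real.log n + c) / 4 ≤ k) :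
    ∑ j ∈ Finset.Icc 1 n, n.choose j * cubeWalkEigenvalue n j ^ (2 * k)
      ≤ 2 * (Real.exp (Real.exp (-c)) - 1) :=
  calc ∑ j ∈ Finset.Icc 1 n, n.choose j * cubeWalkEigenvalue n j ^ (2 * k)
      ≤ ∑ j ∈ Finset.Icc 1 n,
          Real.exp (-c) ^ min j (n + 1 - j) / (min j (n + 1 - j)).factorial :=
        Finset.sum_le_sum fun j hj => choose_mul_cubeWalkEigenvalue_pow_le hj hk
    _ ≤ 2 * ∑ m ∈ Finset.Icc 1 n, Real.exp (-c) ^ m / m.factorial :=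
        sum_Icc_min_reflect_le (t := fun m => Real.exp (-c) ^ m / m.factorial)
          (fun _ => by positivity) n
    _ ≤ 2 * (Real.exp (Real.exp (-c)) - 1) := by
        gcongr
        exact sum_Icc_pow_div_factorial_le (Real.exp_nonneg _) n

end Cube

theorem n_cube_walk_upper_bound_general
    (n : ℕ)
    (ν : (Fin n → ZMod 2) → ℝ)
    (hν : ν = fun s => if cubeWeight s = 0 ∨ cubeWeight s = 1
        then 1 / ((n : ℝ) + 1) else 0)
    (c : ℝ) (k : ℕ)
    (hk : (k : ℝ) = ((n : ℝ) + 1) * (Real.log n + c) / 4) :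
    tv (aconvPow ν k) (fun _ => 1 / (2 ^ n : ℝ)) ^ 2
      ≤ (1 / 2) * (Real.exp (Real.exp (-c)) - 1) := by
  change ν = cubeWalk n at hν
  subst hν
  calc tv (aconvPow (cubeWalk n) k) (fun _ => 1 / (2 ^ n : ℝ)) ^ 2
      ≤ 2 ^ n / 4 * ∑ s, (aconvPow (cubeWalk n) k s - 1 / 2 ^ n) ^ 2 := by
        simpa using tv_sq_le_card_mul_sum_sq (aconvPow (cubeWalk n) k) fun _ => 1 / (2 ^ n : ℝ)
    _ = 1 / 4 * ∑ j ∈ Finset.Icc 1 n, n.choose j * cubeWalkEigenvalue n j ^ (2 * k) := by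
        rw [← sum_sq_charCoeff_aconvPow_cubeWalk_sub_uniform, sum_charCoeff_walsh_sq,
          Fintype.card_fin]
        ring
    _ ≤ 1 / 4 * (2 * (Real.exp (Real.exp (-c)) - 1)) := by
        gcongr
        exact sum_choose_mul_cubeWalkEigenvalue_pow_le hk.ge
    _ = 1 / 2 * (Real.exp (Real.exp (-c)) - 1) := by ring

/-- upper bound for the nearest-neighbour walk with loops on the `n`-cube:
for `k = (n+1)(log n + c)/4`, `‖ν^{⋆k} − π‖² ≤ (1/2)(e^{e^{−c}} − 1)`. -/
theorem n_cube_walk_upper_bound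
    (n : ℕ) (hn : 2 ≤ n)
    (ν : (Fin n → ZMod 2) → ℝ)
    (hν : ν = fun s => if cubeWeight s = 0 ∨ cubeWeight s = 1
        then 1 / ((n : ℝ) + 1) else 0)
    (c : ℝ) (hc : 0 < c) (k : ℕ)
    (hk : (k : ℝ) = ((n : ℝ) + 1) * (Real.log n + c) / 4) :
    tv (aconvPow ν k) (fun _ => 1 / (2 ^ n : ℝ)) ^ 2
      ≤ (1 / 2) * (Real.exp (Real.exp (-c)) - 1) :=
  n_cube_walk_upper_bound_general n ν hν c k hk
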